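/- arXiv:2506.19426 — 4 statements merged into one kernel-verified Lean document; each statement's English description precedes it below -/
import Mathlib

section
/- (Proposition 1.) Assume in addition β¹ ≥ 1 and β² < β¹. Let d_ij > 0 and e_ijs ≥ 0, and for each k ∈ {1, 2} let d_fk ≥ 0 and d_kj ≥ 0 be the distances from the detour point f to charging station k and from station k to customer j, let t_fk ≥ 0 and t_kj ≥ 0 be the corresponding travel times, let e_kjs ≥ 0 be the energy consumed travelling from station k to j, and set e_fk := (e_ijs/d_ij)·d_fk. Let t_if ≥ 0 and let Q^T, Q^G be reals. Assume: (i) 0 ≤ Q^T − e_fk < a₁ for k ∈ {1, 2}; (ii) a₁ ≤ Q^G + e_kjs ≤ Qmax for k ∈ {1, 2}; (iii) d_f1 + d_1j < d_f2 + d_2j (station 1 yields the shorter detour in distance); and (iv) (t_f1 − t_f2) + (e_ijs/(β¹·d_ij))·(d_f1 − d_f2) + (1/β²)·(e_1js − e_2js) + (t_1j − t_2j) > 0. For k ∈ {1, 2}, let τi_k, τf_k ∈ [0, c₂] be any times with SoC(τi_k) = Q^T − e_fk and SoC(τf_k) = Q^G + e_kjs, and define the total detour time T^k := t_if + t_fk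 + (τf_k − τi_k) + t_kj. Then T^1 > T^2: although charging station 1 is closer in total distance, recharging at station 1 takes more time than recharging at station 2. -/
/-- Piecewise linear charging function: `SoC t = β¹·t` for `t ≤ c₁` and
`SoC t = β²·(t − c₂) + Qmax` for `t > c₁`, where `β¹ = a₁/c₁` and
`β² = (Qmax − a₁)/(c₂ − c₁)`. -/
noncomputable def SoC (a₁ Qmax c₁ c₂ : ℝ) (t : ℝ) : ℝ :=
  if t ≤ c₁ then (a₁ / c₁) * t
  else ((Qmax - a₁) / (c₂ - c₁)) * (t - c₂) + Qmax

lemma SoC_inv_low (a₁ Qmax c₁ c₂ σ : ℝ) (ha₁ : 0 < a₁) (haQ : a₁ < Qmax)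
    (hc₁ : 0 < c₁) (hcc : c₁ < c₂)
    (h : SoC a₁ Qmax c₁ c₂ σ < a₁) :
    σ = SoC a₁ Qmax c₁ c₂ σ / (a₁ / c₁) := by
  have hβ2 : 0 < (Qmax - a₁) / (c₂ - c₁) := div_pos (by linarith) (by linarith)
  by_cases hσ : σ ≤ c₁
  · rw [SoC, if_pos hσ] at h ⊢
    field_simp
  · exfalso
    rw [SoC, if_neg hσ] at h
    push_neg at hσ
    have hc2 : c₂ - c₁ ≠ 0 := ne_of_gt (by linarith)
    have key : (Qmax - a₁) / (c₂ - c₁) * (c₁ - c₂) = a₁ - Qmax := by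
      field_simp
      ring
    nlinarith [mul_lt_mul_of_pos_left (show c₁ - c₂ < σ - c₂ by linarith) hβ2]

lemma SoC_inv_high (a₁ Qmax c₁ c₂ σ : ℝ) (ha₁ : 0 < a₁) (haQ : a₁ < Qmax)
    (hc₁ : 0 < c₁) (hcc : c₁ < c₂)
    (h : a₁ ≤ SoC a₁ Qmax c₁ c₂ σ) :
    σ = (SoC a₁ Qmax c₁ c₂ σ - Qmax) / ((Qmax - a₁) / (c₂ - c₁)) + c₂ := by
  have hβ2 : 0 < (Qmax - a₁) / (c₂ - c₁) := div_pos (by linarith) (by linarith)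
  by_cases hσ : σ ≤ c₁
  · rw [SoC, if_pos hσ] at h ⊢
    have hσc : σ = c₁ := by
      have h1 : a₁ / c₁ * σ ≤ a₁ / c₁ * c₁ :=
        mul_le_mul_of_nonneg_left hσ (le_of_lt (div_pos ha₁ hc₁))
      have h2 : a₁ / c₁ * c₁ = a₁ := by field_simp
      have h3 : a₁ / c₁ * σ = a₁ := le_antisymm (by linarith) h
      have hβp : 0 < a₁ / c₁ := div_pos ha₁ hc₁
      nlinarith
    rw [hσc]
    have h2 : a₁ / c₁ * c₁ = a₁ := by field_simp
    rw [h2]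
    have hc2 : c₂ - c₁ ≠ 0 := ne_of_gt (by linarith)
    have hQa : Qmax - a₁ ≠ 0 := ne_of_gt (by linarith)
    field_simp
    ring
  · rw [SoC, if_neg hσ]
    have hc2 : c₂ - c₁ ≠ 0 := ne_of_gt (by linarith)
    have hQa : Qmax - a₁ ≠ 0 := ne_of_gt (by linarith)
    field_simp
    ring

/-- Proposition 1: although charging station 1 is closer in total distance,
recharging at station 1 takes more time than recharging at station 2. -/
theorem detour_time_comparison
    (a₁ Qmax c₁ c₂ : ℝ) (ha₁ : 0 < a₁) (haQ : a₁ < Qmax)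
    (hc₁ : 0 < c₁) (hcc : c₁ < c₂)
    (hβ1 : 1 ≤ a₁ / c₁) (hβ : (Qmax - a₁) / (c₂ - c₁) < a₁ / c₁)
    (dij eijs : ℝ) (hdij : 0 < dij) (heijs : 0 ≤ eijs)
    -- distances, travel times and energies for the two stations
    (df1 df2 d1j d2j tf1 tf2 t1j t2j e1j e2j tif : ℝ)
    (hdf1 : 0 ≤ df1) (hdf2 : 0 ≤ df2) (hd1j : 0 ≤ d1j) (hd2j : 0 ≤ d2j)
    (htf1 : 0 ≤ tf1) (htf2 : 0 ≤ tf2) (ht1j : 0 ≤ t1j) (ht2j : 0 ≤ t2j)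
    (he1j : 0 ≤ e1j) (he2j : 0 ≤ e2j) (htif : 0 ≤ tif)
    (QT QG : ℝ)
    -- hypothesis (i): 0 ≤ Q^T − e_fk < a₁ for k ∈ {1,2}, with e_fk = (e_ijs/d_ij)·d_fk
    (hyp1a : 0 ≤ QT - eijs / dij * df1) (hyp1b : QT - eijs / dij * df1 < a₁)
    (hyp1c : 0 ≤ QT - eijs / dij * df2) (hyp1d : QT - eijs / dij * df2 < a₁)
    -- hypothesis (ii): a₁ ≤ Q^G + e_kjs ≤ Qmax for k ∈ {1,2}
    (hyp2a : a₁ ≤ QG + e1j) (hyp2b : QG + e1j ≤ Qmax)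
    (hyp2c : a₁ ≤ QG + e2j) (hyp2d : QG + e2j ≤ Qmax)
    -- hypothesis (iii): station 1 yields the shorter detour in distance
    (hyp3 : df1 + d1j < df2 + d2j)
    -- hypothesis (iv)
    (hyp4 : (tf1 - tf2) + eijs / (a₁ / c₁ * dij) * (df1 - df2)
              + 1 / ((Qmax - a₁) / (c₂ - c₁)) * (e1j - e2j) + (t1j - t2j) > 0)
    -- charging start/end times at the two stations
    (σi1 σf1 σi2 σf2 : ℝ)
    (hσi1 : σi1 ∈ Set.Icc (0 : ℝ) c₂) (hσf1 : σf1 ∈ Set.Icc (0 : ℝ) c₂)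
    (hσi2 : σi2 ∈ Set.Icc (0 : ℝ) c₂) (hσf2 : σf2 ∈ Set.Icc (0 : ℝ) c₂)
    (hS1 : SoC a₁ Qmax c₁ c₂ σi1 = QT - eijs / dij * df1)
    (hS2 : SoC a₁ Qmax c₁ c₂ σf1 = QG + e1j)
    (hS3 : SoC a₁ Qmax c₁ c₂ σi2 = QT - eijs / dij * df2)
    (hS4 : SoC a₁ Qmax c₁ c₂ σf2 = QG + e2j) :
    tif + tf1 + (σf1 - σi1) + t1j > tif + tf2 + (σf2 - σi2) + t2j := by
  have hβ1pos : 0 < a₁ / c₁ := div_pos ha₁ hc₁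
  have hβ2pos : 0 < (Qmax - a₁) / (c₂ - c₁) := div_pos (by linarith) (by linarith)
  have hi1 := SoC_inv_low a₁ Qmax c₁ c₂ σi1 ha₁ haQ hc₁ hcc (by rw [hS1]; exact hyp1b)
  have hi2 := SoC_inv_low a₁ Qmax c₁ c₂ σi2 ha₁ haQ hc₁ hcc (by rw [hS3]; exact hyp1d)
  have hf1 := SoC_inv_high a₁ Qmax c₁ c₂ σf1 ha₁ haQ hc₁ hcc (by rw [hS2]; exact hyp2a)
  have hf2 := SoC_inv_high a₁ Qmax c₁ c₂ σf2 ha₁ haQ hc₁ hcc (by rw [hS4]; exact hyp2c)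
  rw [hS1] at hi1; rw [hS3] at hi2; rw [hS2] at hf1; rw [hS4] at hf2
  have key : (σf1 - σi1) - (σf2 - σi2)
      = eijs / (a₁ / c₁ * dij) * (df1 - df2)
        + 1 / ((Qmax - a₁) / (c₂ - c₁)) * (e1j - e2j) := by
    rw [hi1, hi2, hf1, hf2]
    have ha : a₁ ≠ 0 := ne_of_gt ha₁
    have hc : c₁ ≠ 0 := ne_of_gt hc₁
    have hd : dij ≠ 0 := ne_of_gt hdij
    have hc2 : c₂ - c₁ ≠ 0 := by intro h; linarith [sub_eq_zero.mp h]
    have hQa : Qmax - a₁ ≠ 0 := by intro h; linarith [sub_eq_zero.mp h]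
    field_simp
    ring
  linarith
end

section
/- (Optimal scenario reduction; Theorem of Heitsch–Römisch and Dupačová–Gröwe-Kuska–Römisch as stated in the paper.) The value Σ_{s ∈ S∖R} p(s) · min_{r ∈ R} ‖e(s) − e(r)‖ is the least element of the set of costs of transport plans: some transport plan attains this cost, and every transport plan has cost at least this value. Equivalently, the minimal probabilistic distance D(P, P^red) over all probability distributions P^red supported on the retained scenarios R equals Σ_{s ∉ R} p(s) · min_{r ∈ R} ‖e(s) − e(r)‖. -/
open Finset

/-- A transport plan for the scenario-reduction transportation problem:
`η s r ≥ 0`, `η s r = 0` whenever `r ∉ R`, and `Σ_{r ∈ R} η s r = p s` for every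
scenario `s`. -/
def IsTransportPlan {ι : Type*} [Fintype ι] (R : Finset ι) (p : ι → ℝ)
    (η : ι → ι → ℝ) : Prop :=
  (∀ s r, 0 ≤ η s r) ∧ (∀ s r, r ∉ R → η s r = 0) ∧ (∀ s, ∑ r ∈ R, η s r = p s)

/-- Optimal scenario reduction (Heitsch–Römisch, Dupačová–Gröwe-Kuska–Römisch):
`Σ_{s ∈ S∖R} p(s) · min_{r ∈ R} ‖e(s) − e(r)‖` is the least element of the set of
costs of transport plans; equivalently, it is the minimal probabilistic distance
`D(P, P^red)` over all probability distributions supported on the retained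
scenarios `R`. -/
theorem optimal_scenario_reduction
    {ι : Type*} [Fintype ι] [DecidableEq ι] [Nonempty ι] (n : ℕ)
    (e : ι → EuclideanSpace ℝ (Fin n)) (p : ι → ℝ)
    (hp : ∀ s, 0 ≤ p s) (hp1 : ∑ s, p s = 1)
    (R : Finset ι) (hR : R.Nonempty) :
    IsLeast
      {c : ℝ | ∃ η : ι → ι → ℝ, IsTransportPlan R p η ∧
        c = ∑ s, ∑ r ∈ R, ‖e s - e r‖ * η s r}
      (∑ s ∈ Finset.univ \ R, p s * (R.inf' hR fun r => ‖e s - e r‖)) := by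
  -- choose a nearest retained scenario for each s
  have hchoice : ∀ s : ι, ∃ r ∈ R, (R.inf' hR fun r => ‖e s - e r‖) = ‖e s - e r‖ :=
    fun s => Finset.exists_mem_eq_inf' hR _
  choose c hcR hc using hchoice
  have hinf_nonneg : ∀ s, 0 ≤ (R.inf' hR fun r => ‖e s - e r‖) := by
    intro s; exact Finset.le_inf' hR _ (fun r _ => norm_nonneg _)
  have hinfR : ∀ s ∈ R, (R.inf' hR fun r => ‖e s - e r‖) = 0 := by
    intro s hs
    refine le_antisymm ?_ (hinf_nonneg s)
    have := Finset.inf'_le (fun r => ‖e s - e r‖) hs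
    exact le_of_le_of_eq this (by simp)
  constructor
  · -- membership: the plan sending s to c s
    refine ⟨fun s r => if r = c s then p s else 0, ⟨?_, ?_, ?_⟩, ?_⟩
    · intro s r; dsimp; split <;> simp [hp s]
    · intro s r hr; dsimp; split
      · next h => exact absurd (h ▸ hcR s) hr
      · rfl
    · intro s
      rw [Finset.sum_ite_eq' R (c s) (fun _ => p s)]
      simp [hcR s]
    · have hterm : ∀ s : ι, (∑ r ∈ R, ‖e s - e r‖ * if r = c s then p s else 0)
          = p s * (R.inf' hR fun r => ‖e s - e r‖) := by
        intro s
        rw [Finset.sum_eq_single (c s)]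
        · simp [hc s, mul_comm]
        · intro r _ hr; simp [hr]
        · intro h; exact absurd (hcR s) h
      calc (∑ s ∈ Finset.univ \ R, p s * (R.inf' hR fun r => ‖e s - e r‖))
          = ∑ s, p s * (R.inf' hR fun r => ‖e s - e r‖) := by
            rw [Finset.sum_subset (Finset.sdiff_subset)]
            intro s _ hs
            have : s ∈ R := by simpa using hs
            simp [hinfR s this]
        _ = ∑ s, ∑ r ∈ R, ‖e s - e r‖ * if r = c s then p s else 0 := by
            exact Finset.sum_congr rfl fun s _ => (hterm s).symm
  · -- lower bound
    rintro x ⟨η, ⟨hη0, hηsupp, hηsum⟩, rfl⟩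
    calc (∑ s ∈ Finset.univ \ R, p s * (R.inf' hR fun r => ‖e s - e r‖))
        ≤ ∑ s, p s * (R.inf' hR fun r => ‖e s - e r‖) := by
          apply Finset.sum_le_sum_of_subset_of_nonneg (Finset.sdiff_subset)
          intro s _ _; exact mul_nonneg (hp s) (hinf_nonneg s)
      _ ≤ ∑ s, ∑ r ∈ R, ‖e s - e r‖ * η s r := by
          apply Finset.sum_le_sum
          intro s _
          calc p s * (R.inf' hR fun r => ‖e s - e r‖)
              = ∑ r ∈ R, (R.inf' hR fun r => ‖e s - e r‖) * η s r := by
                rw [← Finset.mul_sum, hηsum s, mul_comm]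
            _ ≤ ∑ r ∈ R, ‖e s - e r‖ * η s r := by
                apply Finset.sum_le_sum
                intro r hr
                exact mul_le_mul_of_nonneg_right (Finset.inf'_le _ hr) (hη0 s r)
end

section
/- (Optimal redistribution rule.) Let σ : S → S be a selection with σ(s) ∈ R for all s ∈ S, σ(s) = s for all s ∈ R, and ‖e(s) − e(σ(s))‖ = min_{r ∈ R} ‖e(s) − e(r)‖ for all s ∈ S. Then the map η(s, r) := (p(s) if r = σ(s), and 0 otherwise) is a transport plan whose cost equals Σ_{s ∈ S∖R} p(s) · min_{r ∈ R} ‖e(s) − e(r)‖ (hence η is optimal), and the induced reduced probabilities p^red(r) := Σ_{s ∈ S} η(s, r) satisfy p^red(r) = p(r) + Σ_{s ∈ S∖R, σ(s) = r} p(s) for every r ∈ R, with Σ_{r ∈ R} p^red(r) = 1. -/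
open Finset

/-- Optimal redistribution rule: given a nearest-retained-scenario selection `σ`,
the plan `η s r = p s` if `r = σ s` (else `0`) is a transport plan attaining the
optimal cost `Σ_{s ∉ R} p(s) · min_{r ∈ R} ‖e(s) − e(r)‖`, and the induced reduced
probabilities satisfy `p^red(r) = p(r) + Σ_{s ∉ R, σ(s) = r} p(s)` and sum to 1. -/
theorem optimal_redistribution_rule
    {ι : Type*} [Fintype ι] [DecidableEq ι] [Nonempty ι] (n : ℕ)
    (e : ι → EuclideanSpace ℝ (Fin n)) (p : ι → ℝ)
    (hp : ∀ s, 0 ≤ p s) (hp1 : ∑ s, p s = 1)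
    (R : Finset ι) (hR : R.Nonempty)
    (σ : ι → ι) (hσR : ∀ s, σ s ∈ R) (hσid : ∀ s ∈ R, σ s = s)
    (hσmin : ∀ s, ‖e s - e (σ s)‖ = R.inf' hR fun r => ‖e s - e r‖) :
    IsTransportPlan R p (fun s r => if r = σ s then p s else 0) ∧
    (∑ s, ∑ r ∈ R, ‖e s - e r‖ * (if r = σ s then p s else 0))
      = ∑ s ∈ Finset.univ \ R, p s * (R.inf' hR fun r => ‖e s - e r‖) ∧
    (∀ r ∈ R, (∑ s, if r = σ s then p s else 0)
      = p r + ∑ s ∈ (Finset.univ \ R).filter (fun s => σ s = r), p s) ∧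
    (∑ r ∈ R, ∑ s, if r = σ s then p s else 0) = 1 := by
  have hrow : ∀ s, (∑ r ∈ R, if r = σ s then p s else 0) = p s := by
    intro s
    rw [Finset.sum_ite_eq' R (σ s) (fun _ => p s)]
    simp [hσR s]
  have hnn : ∀ s r : ι, 0 ≤ (if r = σ s then p s else 0) := by
    intro s r; split
    · exact hp s
    · exact le_rfl
  have hz : ∀ s r : ι, r ∉ R → (if r = σ s then p s else 0) = 0 := by
    intro s r hr; split
    · next h => exact absurd (h ▸ hσR s) hr
    · rfl
  refine ⟨⟨hnn, hz, hrow⟩, ?_, ?_, ?_⟩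
  · have hterm : ∀ s, (∑ r ∈ R, ‖e s - e r‖ * (if r = σ s then p s else 0))
        = p s * (R.inf' hR fun r => ‖e s - e r‖) := by
      intro s
      rw [Finset.sum_eq_single (σ s)]
      · rw [if_pos rfl, ← hσmin s]; ring
      · intro r _ hr; rw [if_neg hr, mul_zero]
      · intro h; exact absurd (hσR s) h
    rw [Finset.sum_congr rfl fun s _ => hterm s]
    rw [← Finset.sum_sdiff (Finset.subset_univ R)]
    have : ∀ s ∈ R, p s * (R.inf' hR fun r => ‖e s - e r‖) = 0 := by
      intro s hs
      have : (R.inf' hR fun r => ‖e s - e r‖) = 0 := by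
        rw [← hσmin s, hσid s hs, sub_self, norm_zero]
      rw [this, mul_zero]
    rw [Finset.sum_congr rfl this, Finset.sum_const_zero, add_zero]
  · intro r hr
    have hsplit : (∑ s, if r = σ s then p s else 0)
        = (∑ s ∈ Finset.univ \ R, if r = σ s then p s else 0)
          + ∑ s ∈ R, if r = σ s then p s else 0 :=
      (Finset.sum_sdiff (Finset.subset_univ R)).symm
    have h2 : (∑ s ∈ R, if r = σ s then p s else 0) = p r := by
      rw [Finset.sum_eq_single r]
      · rw [if_pos (hσid r hr).symm]
      · intro s hs hne
        rw [if_neg]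
        rw [hσid s hs]
        exact fun h => hne h.symm
      · intro h; exact absurd hr h
    have h3 : (∑ s ∈ Finset.univ \ R, if r = σ s then p s else 0)
        = ∑ s ∈ (Finset.univ \ R).filter (fun s => σ s = r), p s := by
      rw [Finset.sum_filter]
      exact Finset.sum_congr rfl fun s _ => by simp [eq_comm]
    rw [hsplit, h2, h3]; ring
  · rw [Finset.sum_comm]
    rw [Finset.sum_congr rfl fun s _ => hrow s]
    exact hp1
end

section
/- (Correctness of the per-arc lower bound used in Algorithm LB-SFRVCP-T.) Assume β² ≤ β¹. Let τ > 0 be the travel time per unit distance, let i, j ∈ EuclideanSpace ℝ (Fin 2) with d_ij := dist(i, j) > 0, let z ∈ [0, 1] and f := (1 − z)·i + z·j be the detour point, let K be a nonempty finite set of points of EuclideanSpace ℝ (Fin 2) and k ∈ K, and let e ≥ 0 be the energy consumption of arc (i, j) under the current scenario. Suppose the vehicle detours at f, arrives at k with state of charge q_arr := Q^T − (e/d_ij)·dist(f, k) and departs with state of charge q_dep := Q^G + (e/d_ij)·dist(k, j), where τ_i, τ_f ∈ [0, c₂] satisfy τ_i ≤ τ_f, SoC(τ_i) = q_arr and SoC(τ_f)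 = q_dep. Then the total detour duration satisfies τ·(z·d_ij + dist(f, k) + dist(k, j)) + (τ_f − τ_i) ≥ τ·max(d_ij, d̲(i) + d̲(j)) + (1/β¹)·(Q^G + (e/d_ij)·d̲(j) − Q^T). -/
/-- Correctness of the per-arc lower bound used in Algorithm LB-SFRVCP-T: the total
detour duration (travel at speed `1/τ` from `i` to the detour point `f`, then to
station `k ∈ K` and on to `j`, plus the charging time `τf − τi`) is at least
`τ·max(d_ij, d̲(i) + d̲(j)) + (1/β¹)·(Q^G + (e/d_ij)·d̲(j) − Q^T)`. -/
theorem lb_sfrvcp_t_correct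
    (a₁ Qmax c₁ c₂ : ℝ) (ha₁ : 0 < a₁) (haQ : a₁ < Qmax)
    (hc₁ : 0 < c₁) (hcc : c₁ < c₂)
    (hβ : (Qmax - a₁) / (c₂ - c₁) ≤ a₁ / c₁)
    (τ : ℝ) (hτ : 0 < τ)
    (i j : EuclideanSpace ℝ (Fin 2)) (hd : 0 < dist i j)
    (z : ℝ) (hz : z ∈ Set.Icc (0 : ℝ) 1)
    (K : Finset (EuclideanSpace ℝ (Fin 2))) (hK : K.Nonempty)
    (k : EuclideanSpace ℝ (Fin 2)) (hk : k ∈ K)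
    (e QT QG : ℝ) (he : 0 ≤ e)
    (τi τf : ℝ) (hτi : τi ∈ Set.Icc (0 : ℝ) c₂) (hτf : τf ∈ Set.Icc (0 : ℝ) c₂)
    (hle : τi ≤ τf)
    (harr : SoC a₁ Qmax c₁ c₂ τi
      = QT - e / dist i j * dist ((1 - z) • i + z • j) k)
    (hdep : SoC a₁ Qmax c₁ c₂ τf = QG + e / dist i j * dist k j) :
    τ * (z * dist i j + dist ((1 - z) • i + z • j) k + dist k j) + (τf - τi)
      ≥ τ * max (dist i j)
            ((K.inf' hK fun k' => dist i k') + (K.inf' hK fun k' => dist j k'))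
        + (1 / (a₁ / c₁)) * (QG + e / dist i j * (K.inf' hK fun k' => dist j k') - QT) := by
  obtain ⟨hz0, hz1⟩ := hz
  set f := (1 - z) • i + z • j with hfdef
  set β₁ := a₁ / c₁ with hβ₁
  set β₂ := (Qmax - a₁) / (c₂ - c₁) with hβ₂
  have hβ₁pos : 0 < β₁ := div_pos ha₁ hc₁
  have hβ₂pos : 0 < β₂ := div_pos (by linarith) (by linarith)
  have h₁c : β₁ * c₁ = a₁ := div_mul_cancel₀ _ hc₁.ne'
  have h₂c : β₂ * (c₂ - c₁) = Qmax - a₁ := div_mul_cancel₀ _ (by linarith)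
  -- Lipschitz-type bound on the charging function
  have hSoC : SoC a₁ Qmax c₁ c₂ τf - SoC a₁ Qmax c₁ c₂ τi ≤ β₁ * (τf - τi) := by
    unfold SoC
    by_cases h1 : τi ≤ c₁ <;> by_cases h2 : τf ≤ c₁
    · simp only [if_pos h1, if_pos h2]; nlinarith
    · simp only [if_pos h1, if_neg h2]
      push_neg at h2
      nlinarith [mul_nonneg (sub_nonneg.2 hβ) (le_of_lt (sub_pos.2 h2))]
    · exact absurd (hle.trans h2) h1
    · simp only [if_neg h1, if_neg h2]
      nlinarith [mul_nonneg (sub_nonneg.2 hβ) (sub_nonneg.2 hle)]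
  -- distances
  have hif : dist i f = z * dist i j := by
    rw [dist_eq_norm, dist_eq_norm]
    have : i - f = z • (i - j) := by rw [hfdef]; module
    rw [this, norm_smul, Real.norm_eq_abs, abs_of_nonneg hz0]
  have hinf_i : (K.inf' hK fun k' => dist i k') ≤ dist i k := Finset.inf'_le _ hk
  have hinf_j : (K.inf' hK fun k' => dist j k') ≤ dist k j := by
    have := Finset.inf'_le (fun k' => dist j k') hk
    rwa [dist_comm] at this
  -- travel bound
  have htri1 : dist i j ≤ z * dist i j + dist f k + dist k j := by
    calc dist i j ≤ dist i k + dist k j := dist_triangle _ _ _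
    _ ≤ (dist i f + dist f k) + dist k j := by
        have := dist_triangle i f k; linarith
    _ = z * dist i j + dist f k + dist k j := by rw [hif]
  have htri2 : (K.inf' hK fun k' => dist i k') + (K.inf' hK fun k' => dist j k')
      ≤ z * dist i j + dist f k + dist k j := by
    have h1 : (K.inf' hK fun k' => dist i k') ≤ z * dist i j + dist f k := by
      have := dist_triangle i f k
      rw [hif] at this
      linarith [hinf_i]
    linarith [hinf_j]
  have htravel : max (dist i j)
      ((K.inf' hK fun k' => dist i k') + (K.inf' hK fun k' => dist j k'))
      ≤ z * dist i j + dist f k + dist k j := max_le htri1 htri2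
  -- charging bound
  have hed : 0 ≤ e / dist i j := div_nonneg he hd.le
  have hcharge : (1 / β₁) * (QG + e / dist i j * (K.inf' hK fun k' => dist j k') - QT)
      ≤ τf - τi := by
    rw [div_mul_eq_mul_div, one_mul, div_le_iff₀ hβ₁pos]
    have h1 : QG + e / dist i j * dist k j - (QT - e / dist i j * dist f k)
        ≤ β₁ * (τf - τi) := by rw [← harr, ← hdep]; exact hSoC
    have h2 : e / dist i j * (K.inf' hK fun k' => dist j k') ≤ e / dist i j * dist k j :=
      mul_le_mul_of_nonneg_left hinf_j hed
    have h3 : 0 ≤ e / dist i j * dist f k := mul_nonneg hed dist_nonneg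
    calc QG + e / dist i j * (K.inf' hK fun k' => dist j k') - QT
        ≤ QG + e / dist i j * dist k j - (QT - e / dist i j * dist f k) := by linarith
      _ ≤ β₁ * (τf - τi) := h1
      _ = (τf - τi) * β₁ := mul_comm _ _
  have := mul_le_mul_of_nonneg_left htravel hτ.le
  linarith
end
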